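/- arXiv:1901.01952 — 6 statements merged into one kernel-verified Lean document; each statement's English description precedes it below -/
import Mathlib

section
/- If an infinite word w over a finite alphabet satisfies p_w(n) ≤ n for some n ≥ 1 (where p_w is the factor complexity function counting distinct factors of length n), then w is ultimately periodic. -/
/-- The factor of length `n` of the infinite word `w` starting at position `i`. -/
def wordFactor {A : Type*} (w : ℕ → A) (i n : ℕ) : List A :=
  (List.range n).map (fun k => w (i + k))

/-- The factor complexity function of an infinite word. -/
noncomputable def complexity {A : Type*} (w : ℕ → A) (n : ℕ) : ℕ :=
  Set.ncard {u : List A | ∃ i, u = wordFactor w i n}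

/-- An infinite word is ultimately periodic if `w i = w (i + t)` for all large `i`,
for some `t ≥ 1`. -/
def UltimatelyPeriodic {A : Type*} (w : ℕ → A) : Prop :=
  ∃ t, 1 ≤ t ∧ ∃ N, ∀ i, N ≤ i → w i = w (i + t)

namespace MHaux

variable {A : Type*} [Fintype A] (w : ℕ → A)

def F (w : ℕ → A) (m : ℕ) : Set (List A) := {u | ∃ i, u = wordFactor w i m}

lemma length_wordFactor (i m : ℕ) : (wordFactor w i m).length = m := by
  simp [wordFactor]

lemma finF (m : ℕ) : (F w m).Finite := by
  apply (List.finite_length_eq A m).subset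
  rintro u ⟨i, rfl⟩
  exact length_wordFactor w i m

lemma concat_wordFactor (i m : ℕ) :
    wordFactor w i (m + 1) = wordFactor w i m ++ [w (i + m)] := by
  simp [wordFactor, List.range_succ]

lemma cons_wordFactor (i m : ℕ) :
    wordFactor w i (m + 1) = w i :: wordFactor w (i + 1) m := by
  simp [wordFactor, List.range_succ_eq_map, Function.comp_def]
  intro a _
  congr 1
  omega

lemma dropLast_wordFactor (i m : ℕ) :
    (wordFactor w i (m + 1)).dropLast = wordFactor w i m := by
  rw [concat_wordFactor, List.dropLast_concat]

lemma image_dropLast (m : ℕ) : List.dropLast '' F w (m + 1) = F w m := by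
  ext u
  constructor
  · rintro ⟨v, ⟨i, rfl⟩, rfl⟩
    exact ⟨i, (dropLast_wordFactor w i m)⟩
  · rintro ⟨i, rfl⟩
    exact ⟨wordFactor w i (m + 1), ⟨i, rfl⟩, dropLast_wordFactor w i m⟩

lemma complexity_eq (m : ℕ) : complexity w m = (F w m).ncard := rfl

lemma complexity_zero : complexity w 0 = 1 := by
  have : F w 0 = {([] : List A)} := by
    ext u
    simp [F, wordFactor]
  rw [complexity_eq, this, Set.ncard_singleton]

lemma complexity_mono (m : ℕ) : complexity w m ≤ complexity w (m + 1) := by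
  rw [complexity_eq, complexity_eq, ← image_dropLast w m]
  exact Set.ncard_image_le (finF w (m + 1))

end MHaux

theorem complexity_le_self_imp_ultimately_periodic
    {A : Type*} [Fintype A] (w : ℕ → A) (n : ℕ) (hn : 1 ≤ n)
    (h : complexity w n ≤ n) : UltimatelyPeriodic w := by
  classical
  open MHaux in
  -- find m < n with equal complexity
  have hex : ∃ m, m < n ∧ complexity w (m + 1) = complexity w m := by
    by_contra hc
    push_neg at hc
    have key : ∀ k, k ≤ n → k + 1 ≤ complexity w k := by
      intro k hk
      induction k with
      | zero => simp [complexity_zero]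
      | succ k ih =>
        have h1 := ih (by omega)
        have h2 := complexity_mono w k
        have h3 := hc k (by omega)
        omega
    have := key n le_rfl
    omega
  obtain ⟨m, hmn, hmeq⟩ := hex
  have hinj : Set.InjOn List.dropLast (F w (m + 1)) :=
    Set.injOn_of_ncard_image_eq (by rw [image_dropLast w m]; exact hmeq.symm) (finF w (m + 1))
  -- key step: equal length-m factors have equal successors
  have step : ∀ i j, wordFactor w i m = wordFactor w j m →
      wordFactor w (i + 1) m = wordFactor w (j + 1) m := by
    intro i j hij
    have h1 : wordFactor w i (m + 1) = wordFactor w j (m + 1) := by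
      apply hinj ⟨i, rfl⟩ ⟨j, rfl⟩
      rw [dropLast_wordFactor, dropLast_wordFactor, hij]
    cases m with
    | zero => simp [wordFactor]
    | succ m' =>
      rw [cons_wordFactor w i (m' + 1), cons_wordFactor w j (m' + 1)] at h1
      exact ((List.cons.injEq _ _ _ _).mp h1).2
  rcases Nat.eq_zero_or_pos m with hm0 | hm1
  · -- m = 0 : all letters equal
    subst hm0
    refine ⟨1, le_rfl, 0, fun i _ => ?_⟩
    have h1 : wordFactor w i 1 = wordFactor w (i + 1) 1 := by
      apply hinj ⟨i, rfl⟩ ⟨i + 1, rfl⟩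
      rw [dropLast_wordFactor, dropLast_wordFactor]
      rfl
    rw [cons_wordFactor w i 0, cons_wordFactor w (i + 1) 0] at h1
    exact ((List.cons.injEq _ _ _ _).mp h1).1
  · -- m ≥ 1
    -- pigeonhole: two positions with same length-m factor
    have hpig : ∃ i j : ℕ, i < j ∧ wordFactor w i m = wordFactor w j m := by
      have hmap : Set.MapsTo (fun i => wordFactor w i m) Set.univ (F w m) :=
        fun i _ => ⟨i, rfl⟩
      obtain ⟨i, -, j, -, hne, heq⟩ :=
        Set.infinite_univ.exists_ne_map_eq_of_mapsTo hmap (finF w m)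
      rcases lt_or_gt_of_ne hne with hlt | hgt
      · exact ⟨i, j, hlt, heq⟩
      · exact ⟨j, i, hgt, heq.symm⟩
    obtain ⟨i, j, hij, heq⟩ := hpig
    refine ⟨j - i, by omega, i, fun k hk => ?_⟩
    have prop : ∀ d, wordFactor w (i + d) m = wordFactor w (j + d) m := by
      intro d
      induction d with
      | zero => exact heq
      | succ d ih => exact step _ _ ih
    have hk' : wordFactor w k m = wordFactor w (k + (j - i)) m := by
      have := prop (k - i)
      rw [show i + (k - i) = k by omega, show j + (k - i) = k + (j - i) by omega] at this
      exact this
    obtain ⟨m', rfl⟩ : ∃ m', m = m' + 1 := ⟨m - 1, by omega⟩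
    rw [cons_wordFactor w k m', cons_wordFactor w (k + (j - i)) m'] at hk'
    exact (List.cons.injEq _ _ _ _).mp hk' |>.1
end

section
/- The total number of Sturmian factors of length n equals 1 + Σ_{q=1}^{n} φ(q)(n+1−q), where φ is Euler's totient function. -/
/-- The lower mechanical word of slope `σ` and intercept `ρ`. -/
noncomputable def lowerMech (σ ρ : ℝ) (n : ℕ) : ℤ :=
  ⌊(n + 1) * σ + ρ⌋ - ⌊n * σ + ρ⌋

/-- The prefix of length `n` of the lower mechanical word of slope `σ` and intercept `ρ`. -/
noncomputable def mechPrefix (σ ρ : ℝ) (n : ℕ) : List ℤ :=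
  (List.range n).map (fun k => lowerMech σ ρ k)

/-- The set of Sturmian factors of length `n`: words of the form `s_{σ,ρ}[0..n)`
for some irrational slope `σ ∈ (0,1)` and some intercept `ρ ∈ [0,1)`. -/
def SturmianFactors (n : ℕ) : Set (List ℤ) :=
  {u | ∃ σ ρ : ℝ, Irrational σ ∧ 0 < σ ∧ σ < 1 ∧ 0 ≤ ρ ∧ ρ < 1 ∧ u = mechPrefix σ ρ n}

/-!
A prefix `s_{σ,ρ}[0..n)` with `ρ ∈ [0,1)` is the difference sequence of the floor vector
`k ↦ ⌊kσ + ρ⌋` (`k ≤ n`), and the parameters realising a given floor vector form a convex cell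
of `(0,1) × [0,1)` which also contains points of irrational slope. So we count nonempty cells.
Going from `n` to `n + 1` subdivides each cell along the lines `(n + 1)σ + ρ = m`; by convexity
the new cells are in bijection with the old ones plus the pairs (cell, `m`) for which the line
cuts the cell. Such a cut is determined by the largest slope on the line inside the cell, a
rational in `(0,1]` with denominator at most `n + 1`, and each of these `∑_{q ≤ n+1} φ(q)`
rationals occurs.
-/

open Set Filter Topology

lemma Rat.num_den_natCast_div_of_coprime {p q : ℕ} (hq : 0 < q) (h : q.Coprime p) :
    ((p : ℚ) / q).num = p ∧ ((p : ℚ) / q).den = q := by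
  have hq' : (0 : ℤ) < q := by exact_mod_cast hq
  have hco : Nat.Coprime (p : ℤ).natAbs (q : ℤ).natAbs := by simpa using h.symm
  have hnum := Rat.num_div_eq_of_coprime hq' hco
  have hden := Rat.den_div_eq_of_coprime hq' hco
  push_cast at hnum hden
  exact ⟨hnum, by exact_mod_cast hden⟩

lemma setOf_rat_den_le_eq_image (N : ℕ) : {s : ℚ | 0 < s ∧ s ≤ 1 ∧ s.den ≤ N} =
    ((Finset.Icc 1 N).sigma fun q => {p ∈ Finset.Ico 1 (1 + q) | q.Coprime p}).image
      fun x => (x.2 : ℚ) / x.1 := by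
  ext s
  simp only [mem_ofPred_eq, Finset.coe_image, mem_image, Finset.mem_coe, Finset.mem_sigma,
    Finset.mem_Icc, Finset.mem_filter, Finset.mem_Ico, Sigma.exists]
  constructor
  · rintro ⟨hs0, hs1, hden⟩
    have hnum : 0 < s.num := Rat.num_pos.mpr hs0
    have hle : s.num ≤ s.den := Rat.num_le_denom_iff.mpr hs1
    have hcast : ((s.num.toNat : ℕ) : ℚ) = s.num := by exact_mod_cast Int.toNat_of_nonneg hnum.le
    refine ⟨s.den, s.num.toNat, ⟨⟨s.den_pos, hden⟩, ⟨by omega, by omega⟩, ?_⟩, ?_⟩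
    · rw [show s.num.toNat = s.num.natAbs by omega]
      exact s.reduced.symm
    · rw [hcast, Rat.num_div_den]
  · rintro ⟨q, p, ⟨⟨hq1, hqN⟩, ⟨hp1, hpq⟩, hco⟩, rfl⟩
    refine ⟨by positivity, ?_, (Rat.num_den_natCast_div_of_coprime hq1 hco).2.trans_le hqN⟩
    rw [div_le_one (by positivity)]
    exact_mod_cast (by omega : p ≤ q)

lemma ncard_setOf_rat_den_le (N : ℕ) :
    {s : ℚ | 0 < s ∧ s ≤ 1 ∧ s.den ≤ N}.ncard = ∑ q ∈ Finset.Icc 1 N, q.totient := by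
  rw [setOf_rat_den_le_eq_image, ncard_coe_finset, Finset.card_image_of_injOn, Finset.card_sigma]
  · simp only [Nat.filter_coprime_Ico_eq_totient]
  rintro ⟨q, p⟩ hx ⟨q', p'⟩ hx' (h : (p : ℚ) / q = p' / q')
  simp only [Finset.coe_sigma, mem_sigma_iff, Finset.mem_coe, Finset.mem_Icc,
    Finset.mem_filter, Finset.mem_Ico] at hx hx'
  have e := Rat.num_den_natCast_div_of_coprime hx.1.1 hx.2.2
  have e' := Rat.num_den_natCast_div_of_coprime hx'.1.1 hx'.2.2
  rw [h] at e
  obtain rfl : q = q' := e.2.symm.trans e'.2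
  obtain rfl : p = p' := by exact_mod_cast e.1.symm.trans e'.1
  rfl

theorem Filter.Eventually.exists_irrational {P : ℝ → Prop} {a : ℝ}
    (h : ∀ᶠ x in 𝓝[<] a, P x) : ∃ x, Irrational x ∧ P x := by
  obtain ⟨l, hl, hsub⟩ := mem_nhdsLT_iff_exists_Ioo_subset.mp h
  obtain ⟨x, hx, hlx, hxa⟩ := exists_irrational_btwn hl
  exact ⟨x, hx, hsub ⟨hlx, hxa⟩⟩

lemma exists_lt_forall_ceil_sub_one_lt {a : ℝ} (ha : 0 < a) (c : ℕ → ℝ) (n : ℕ) :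
    ∃ σ, 0 < σ ∧ σ < a ∧ ∀ k ≤ n, (⌈c k * a⌉ : ℝ) - 1 < c k * σ := by
  have hev : ∀ᶠ σ in 𝓝 a, 0 < σ ∧ ∀ k ∈ Iic n, (⌈c k * a⌉ : ℝ) - 1 < c k * σ :=
    (eventually_gt_nhds ha).and ((eventually_all_finite (finite_Iic n)).mpr fun k _ =>
      (tendsto_id.const_mul (c k)).eventually_const_lt
        (by linarith [Int.ceil_lt_add_one (c k * a)]))
  obtain ⟨σ, ⟨hσ0, hσ⟩, hσa⟩ :=
    ((eventually_nhdsWithin_of_eventually_nhds hev).and (self_mem_nhdsWithin (s := Iio a))).exists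
  exact ⟨σ, hσ0, hσa, hσ⟩

lemma natCast_add_one_sub_pos {k n : ℕ} (hk : k ≤ n) : (0 : ℝ) < n + 1 - k := by
  have : (k : ℝ) ≤ n := by exact_mod_cast hk
  linarith

namespace Sturmian

def params : Set (ℝ × ℝ) := Ioo 0 1 ×ˢ Ico 0 1

noncomputable def floorVec (n : ℕ) (p : ℝ × ℝ) : ℕ → ℤ :=
  fun k => if k ≤ n then ⌊k * p.1 + p.2⌋ else 0

def floorVecs (n : ℕ) : Set (ℕ → ℤ) := floorVec n '' params

def cell (n : ℕ) (g : ℕ → ℤ) : Set (ℝ × ℝ) :=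
  {p | p ∈ params ∧ ∀ k ≤ n, (k : ℝ) * p.1 + p.2 ∈ Ico (g k : ℝ) (g k + 1)}

variable {n : ℕ} {g : ℕ → ℤ} {p : ℝ × ℝ} {m : ℤ} {σ : ℝ}

lemma floorVec_of_lt {k : ℕ} (hk : n < k) : floorVec n p k = 0 := by
  simp [floorVec, hk.not_ge]

lemma mem_cell_floorVec (hp : p ∈ params) : p ∈ cell n (floorVec n p) := by
  refine ⟨hp, fun k hk => ?_⟩
  simp only [floorVec, if_pos hk]
  exact ⟨Int.floor_le _, Int.lt_floor_add_one _⟩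

lemma floorVec_eq_of_mem_cell (hg : ∀ k, n < k → g k = 0) (hp : p ∈ cell n g) :
    floorVec n p = g := by
  funext k
  by_cases hk : k ≤ n
  · simp only [floorVec, if_pos hk]
    exact Int.floor_eq_iff.mpr (hp.2 k hk)
  · rw [floorVec_of_lt (not_le.mp hk), hg k (not_le.mp hk)]

lemma mem_floorVecs_iff :
    g ∈ floorVecs n ↔ (∀ k, n < k → g k = 0) ∧ (cell n g).Nonempty := by
  constructor
  · rintro ⟨p, hp, rfl⟩
    exact ⟨fun k => floorVec_of_lt, p, mem_cell_floorVec hp⟩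
  · rintro ⟨hg, p, hp⟩
    exact ⟨p, hp.1, floorVec_eq_of_mem_cell hg hp⟩

lemma eq_zero_of_mem_floorVecs (hg : g ∈ floorVecs n) {k : ℕ} (hk : n < k) : g k = 0 :=
  (mem_floorVecs_iff.mp hg).1 k hk

lemma apply_zero_of_mem_floorVecs (hg : g ∈ floorVecs n) : g 0 = 0 := by
  obtain ⟨p, ⟨-, hρ⟩, rfl⟩ := hg
  simpa [floorVec] using Int.floor_eq_zero_iff.mpr hρ

lemma floorVec_mem_Icc (hp : p ∈ params) (k : ℕ) : floorVec n p k ∈ Icc 0 (n : ℤ) := by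
  obtain ⟨⟨hσ0, hσ1⟩, hρ0, hρ1⟩ := hp
  by_cases hk : k ≤ n
  · have hkn : (k : ℝ) ≤ n := by exact_mod_cast hk
    simp only [floorVec, if_pos hk, mem_Icc, Int.floor_nonneg]
    refine ⟨by positivity, Int.le_of_lt_add_one (Int.floor_lt.mpr ?_)⟩
    push_cast
    nlinarith
  · simp [floorVec_of_lt (not_le.mp hk)]

lemma finite_floorVecs (n : ℕ) : (floorVecs n).Finite := by
  refine Finite.of_finite_image (f := fun g (k : Fin (n + 1)) => g k) ?_ ?_
  · refine (Finite.pi fun _ => finite_Icc (0 : ℤ) n).subset ?_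
    rintro _ ⟨_, ⟨p, hp, rfl⟩, rfl⟩ k -
    exact floorVec_mem_Icc hp k
  · intro g hg g' hg' h
    funext k
    by_cases hk : k ≤ n
    · exact congrFun h ⟨k, Nat.lt_succ_of_le hk⟩
    · rw [eq_zero_of_mem_floorVecs hg (not_le.mp hk), eq_zero_of_mem_floorVecs hg' (not_le.mp hk)]

lemma convex_cell (n : ℕ) (g : ℕ → ℤ) : Convex ℝ (cell n g) := by
  rintro x ⟨hx, hxk⟩ y ⟨hy, hyk⟩ a b ha hb hab
  refine ⟨((convex_Ioo 0 1).prod (convex_Ico 0 1)) hx hy ha hb hab, fun k hk => ?_⟩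
  have key := convex_Ico (g k : ℝ) (g k + 1) (hxk k hk) (hyk k hk) ha hb hab
  simp only [smul_eq_mul] at key
  convert key using 1
  simp only [Prod.fst_add, Prod.snd_add, Prod.smul_fst, Prod.smul_snd, smul_eq_mul]
  ring

def nextArg (n : ℕ) (p : ℝ × ℝ) : ℝ := (n + 1) * p.1 + p.2

def nextFloors (n : ℕ) (g : ℕ → ℤ) : Set ℤ := (fun p => ⌊nextArg n p⌋) '' cell n g

def cuts (n : ℕ) (g : ℕ → ℤ) : Set ℤ :=
  {m | (∃ x ∈ cell n g, nextArg n x < m) ∧ ∃ y ∈ cell n g, (m : ℝ) ≤ nextArg n y}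

lemma exists_mem_cell_nextArg_eq (hm : m ∈ cuts n g) :
    ∃ p ∈ cell n g, nextArg n p = m := by
  obtain ⟨⟨x, hx, hxm⟩, y, hy, hym⟩ := hm
  have hcont : Continuous (nextArg n) := by unfold nextArg; fun_prop
  exact (convex_cell n g).isPreconnected.intermediate_value hx hy hcont.continuousOn
    ⟨hxm.le, hym⟩

lemma cuts_subset_nextFloors : cuts n g ⊆ nextFloors n g := by
  intro m hm
  obtain ⟨p, hp, hpm⟩ := exists_mem_cell_nextArg_eq hm
  exact ⟨p, hp, by simp only [hpm, Int.floor_intCast]⟩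

lemma mem_cuts_iff :
    m ∈ cuts n g ↔ m ∈ nextFloors n g ∧ ∃ m' ∈ nextFloors n g, m' < m := by
  constructor
  · intro hm
    obtain ⟨x, hx, hxm⟩ := hm.1
    exact ⟨cuts_subset_nextFloors hm, _, ⟨x, hx, rfl⟩, Int.floor_lt.mpr hxm⟩
  · rintro ⟨⟨y, hy, rfl⟩, _, ⟨x, hx, rfl⟩, hlt⟩
    refine ⟨⟨x, hx, ?_⟩, y, hy, Int.floor_le _⟩
    calc nextArg n x < ⌊nextArg n x⌋ + 1 := Int.lt_floor_add_one _
      _ ≤ ⌊nextArg n y⌋ := by exact_mod_cast hlt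

lemma exists_isLeast_nextFloors (hg : g ∈ floorVecs n) : ∃ m, IsLeast (nextFloors n g) m := by
  obtain ⟨-, p, hp⟩ := mem_floorVecs_iff.mp hg
  have hbdd : ∀ m ∈ nextFloors n g, 0 ≤ m := by
    rintro _ ⟨q, ⟨⟨⟨hσ0, -⟩, hρ0, -⟩, -⟩, rfl⟩
    exact Int.floor_nonneg.mpr (by unfold nextArg; positivity)
  obtain ⟨m, hm, hmin⟩ := Int.exists_least_of_bdd ⟨0, hbdd⟩ ⟨_, p, hp, rfl⟩
  exact ⟨m, hm, hmin⟩

def truncVec (n : ℕ) (g : ℕ → ℤ) : ℕ → ℤ := fun k => if k ≤ n then g k else 0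

lemma truncVec_floorVec_succ : truncVec n (floorVec (n + 1) p) = floorVec n p := by
  funext k
  by_cases hk : k ≤ n
  · simp [truncVec, floorVec, hk, hk.trans n.le_succ]
  · simp [truncVec, floorVec, hk]

lemma floorVec_succ_self : floorVec (n + 1) p (n + 1) = ⌊nextArg n p⌋ := by
  simp [floorVec, nextArg]

def extensions (n : ℕ) : Set ((ℕ → ℤ) × ℤ) := {x | x.1 ∈ floorVecs n ∧ x.2 ∈ nextFloors n x.1}

def cutPairs (n : ℕ) : Set ((ℕ → ℤ) × ℤ) := {x | x.1 ∈ floorVecs n ∧ x.2 ∈ cuts n x.1}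

lemma image_floorVecs_succ :
    (fun g => (truncVec n g, g (n + 1))) '' floorVecs (n + 1) = extensions n := by
  ext ⟨g, m⟩
  simp only [mem_image, Prod.mk.injEq]
  constructor
  · rintro ⟨_, ⟨p, hp, rfl⟩, rfl, rfl⟩
    rw [truncVec_floorVec_succ, floorVec_succ_self]
    exact ⟨⟨p, hp, rfl⟩, p, mem_cell_floorVec hp, rfl⟩
  · rintro ⟨hg, p, hp, rfl⟩
    refine ⟨floorVec (n + 1) p, ⟨p, hp.1, rfl⟩, ?_, floorVec_succ_self⟩
    rw [truncVec_floorVec_succ]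
    exact floorVec_eq_of_mem_cell (fun k => eq_zero_of_mem_floorVecs hg) hp

lemma injOn_truncVec_apply_succ :
    InjOn (fun g => (truncVec n g, g (n + 1))) (floorVecs (n + 1)) := by
  intro g hg g' hg' h
  simp only [Prod.mk.injEq] at h
  funext k
  rcases lt_trichotomy k (n + 1) with hk | rfl | hk
  · simpa [truncVec, Nat.lt_succ_iff.mp hk] using congrFun h.1 k
  · exact h.2
  · rw [eq_zero_of_mem_floorVecs hg hk, eq_zero_of_mem_floorVecs hg' hk]

lemma image_fst_extensions_diff_cutPairs :
    Prod.fst '' (extensions n \ cutPairs n) = floorVecs n := by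
  refine Subset.antisymm (by rintro _ ⟨x, ⟨hx, -⟩, rfl⟩; exact hx.1) fun g hg => ?_
  obtain ⟨m, hm, hmin⟩ := exists_isLeast_nextFloors hg
  refine ⟨(g, m), ⟨⟨hg, hm⟩, fun hcut => ?_⟩, rfl⟩
  obtain ⟨-, m', hm', hlt⟩ := mem_cuts_iff.mp hcut.2
  exact (hmin hm').not_gt hlt

lemma injOn_fst_extensions_diff_cutPairs : InjOn Prod.fst (extensions n \ cutPairs n) := by
  rintro ⟨g, m⟩ ⟨⟨hg, hm⟩, hcut⟩ ⟨g', m'⟩ ⟨⟨-, hm'⟩, hcut'⟩ (rfl : g = g')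
  have hnot : ∀ {a b}, a ∈ nextFloors n g → b ∈ nextFloors n g → (g, a) ∉ cutPairs n → a ≤ b :=
    fun ha hb hab => not_lt.mp fun hlt => hab ⟨hg, mem_cuts_iff.mpr ⟨ha, _, hb, hlt⟩⟩
  exact congrArg _ (le_antisymm (hnot hm hm' hcut) (hnot hm' hm hcut'))

lemma ncard_floorVecs_succ (n : ℕ) :
    (floorVecs (n + 1)).ncard = (floorVecs n).ncard + (cutPairs n).ncard := by
  have hext : (extensions n).ncard = (floorVecs (n + 1)).ncard := by
    rw [← image_floorVecs_succ, injOn_truncVec_apply_succ.ncard_image]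
  have hfin : (extensions n).Finite := image_floorVecs_succ ▸ (finite_floorVecs _).image _
  have hsub : cutPairs n ⊆ extensions n := fun x hx => ⟨hx.1, cuts_subset_nextFloors hx.2⟩
  rw [← hext, ← ncard_sdiff_add_ncard_of_subset hsub hfin,
    ← injOn_fst_extensions_diff_cutPairs.ncard_image, image_fst_extensions_diff_cutPairs]

def linePoint (n : ℕ) (m : ℤ) (σ : ℝ) : ℝ × ℝ := (σ, m - (n + 1) * σ)

lemma nextArg_linePoint (m : ℤ) (σ : ℝ) : nextArg n (linePoint n m σ) = m := by
  simp only [nextArg, linePoint]; ring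

lemma linePoint_mem_cell_iff (hg0 : g 0 = 0) :
    linePoint n m σ ∈ cell n g ↔ σ ∈ Ioo 0 1 ∧
      ∀ k ≤ n, (m - g k - 1 : ℝ) < (n + 1 - k) * σ ∧ (n + 1 - k) * σ ≤ m - g k := by
  simp only [cell, params, linePoint, mem_ofPred_eq, mem_prod, mem_Ico]
  constructor
  · rintro ⟨⟨hσ, -⟩, hk⟩
    exact ⟨hσ, fun k hkn => ⟨by linarith [(hk k hkn).2], by linarith [(hk k hkn).1]⟩⟩
  · rintro ⟨hσ, hk⟩
    have h0 := hk 0 n.zero_le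
    simp only [hg0, Int.cast_zero, CharP.cast_eq_zero, sub_zero] at h0
    exact ⟨⟨hσ, by linarith, by linarith⟩, fun k hkn =>
      ⟨by linarith [(hk k hkn).2], by linarith [(hk k hkn).1]⟩⟩

lemma exists_linePoint_mem_cell (hm : m ∈ cuts n g) :
    ∃ σ, linePoint n m σ ∈ cell n g := by
  obtain ⟨p, hp, hpm⟩ := exists_mem_cell_nextArg_eq hm
  refine ⟨p.1, ?_⟩
  convert hp using 1
  ext
  · rfl
  · simp only [linePoint, ← hpm, nextArg]; ring

def maxSlope (n : ℕ) (g : ℕ → ℤ) (m : ℤ) : ℚ :=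
  min 1 ((Finset.range (n + 1)).inf' Finset.nonempty_range_add_one
    fun k => (m - g k) / (n + 1 - k))

lemma le_maxSlope_iff :
    σ ≤ maxSlope n g m ↔ σ ≤ 1 ∧ ∀ k ≤ n, (n + 1 - k) * σ ≤ m - g k := by
  rw [maxSlope, Rat.cast_min, Finset.apply_inf'_eq_inf'_comp _ _ fun _ _ => Rat.cast_min _ _,
    le_min_iff, Finset.le_inf'_iff, Rat.cast_one]
  refine and_congr_right fun _ => forall_congr' fun k => ?_
  rw [Finset.mem_range, Nat.lt_succ_iff]
  refine imp_congr_right fun hk => ?_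
  simp only [Function.comp_apply]
  push_cast
  rw [le_div_iff₀ (natCast_add_one_sub_pos hk), mul_comm]

lemma maxSlope_le {k : ℕ} (hk : k ≤ n) :
    maxSlope n g m ≤ (m - g k) / (n + 1 - k) :=
  (min_le_right _ _).trans (Finset.inf'_le _ (Finset.mem_range.mpr (Nat.lt_succ_of_le hk)))

lemma den_maxSlope_le (n : ℕ) (g : ℕ → ℤ) (m : ℤ) : (maxSlope n g m).den ≤ n + 1 := by
  rcases min_choice (1 : ℚ) ((Finset.range (n + 1)).inf' Finset.nonempty_range_add_one
    fun k => (m - g k) / (n + 1 - k)) with h | h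
  · rw [maxSlope, h, Rat.den_one]; omega
  obtain ⟨k, hk, heq⟩ := Finset.exists_mem_eq_inf' Finset.nonempty_range_add_one
    fun k => ((m : ℚ) - g k) / (n + 1 - k)
  have hk : k ≤ n := Nat.lt_succ_iff.mp (Finset.mem_range.mp hk)
  have hdiv : ((m : ℚ) - g k) / (n + 1 - k) = Rat.divInt (m - g k) (n + 1 - k : ℕ) := by
    rw [Rat.divInt_eq_div]; push_cast [Nat.cast_sub (hk.trans n.le_succ)]; ring
  have hdvd : (maxSlope n g m).den ∣ n + 1 - k := by
    rw [maxSlope, h, heq, hdiv, ← Int.natCast_dvd_natCast]; exact Rat.den_dvd _ _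
  exact (Nat.le_of_dvd (by omega) hdvd).trans (Nat.sub_le _ _)

lemma eq_ceil_of_linePoint_mem_cell  (h : linePoint n m σ ∈ cell n g) :
    m = ⌈(n + 1) * σ⌉ := by
  obtain ⟨⟨-, hρ0, hρ1⟩, -⟩ := h
  simp only [linePoint] at hρ0 hρ1
  exact (Int.ceil_eq_iff.mpr ⟨by linarith, by linarith⟩).symm

lemma le_maxSlope_of_linePoint_mem_cell (hg0 : g 0 = 0)
    (h : linePoint n m σ ∈ cell n g) : σ ≤ maxSlope n g m := by
  rw [linePoint_mem_cell_iff hg0] at h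
  exact le_maxSlope_iff.mpr ⟨h.1.2.le, fun k hk => (h.2 k hk).2⟩

lemma linePoint_mem_cell_of_le (hg0 : g 0 = 0) {σ₀ : ℝ}
    (h₀ : linePoint n m σ₀ ∈ cell n g) (hσ₀ : σ₀ ≤ σ) (hσ : σ ≤ maxSlope n g m) (hσ1 : σ < 1) :
    linePoint n m σ ∈ cell n g := by
  rw [linePoint_mem_cell_iff hg0] at h₀ ⊢
  refine ⟨⟨h₀.1.1.trans_le hσ₀, hσ1⟩, fun k hk => ⟨?_, (le_maxSlope_iff.mp hσ).2 k hk⟩⟩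
  exact (h₀.2 k hk).1.trans_le (mul_le_mul_of_nonneg_left hσ₀ (natCast_add_one_sub_pos hk).le)

lemma maxSlope_pos {x : (ℕ → ℤ) × ℤ} (hx : x ∈ cutPairs n) : 0 < maxSlope n x.1 x.2 := by
  obtain ⟨σ, hσ⟩ := exists_linePoint_mem_cell hx.2
  have h0 : 0 < σ := hσ.1.1.1
  have hle := le_maxSlope_of_linePoint_mem_cell (apply_zero_of_mem_floorVecs hx.1) hσ
  exact_mod_cast h0.trans_le hle

lemma injOn_maxSlope (n : ℕ) : InjOn (fun x => maxSlope n x.1 x.2) (cutPairs n) := by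
  rintro ⟨g, m⟩ ⟨hg, hm⟩ ⟨g', m'⟩ ⟨hg', hm'⟩ (heq : maxSlope n g m = maxSlope n g' m')
  have hg0 := apply_zero_of_mem_floorVecs hg
  have hg0' := apply_zero_of_mem_floorVecs hg'
  obtain ⟨σ₁, h₁⟩ := exists_linePoint_mem_cell hm
  obtain ⟨σ₂, h₂⟩ := exists_linePoint_mem_cell hm'
  have hσ1 : max σ₁ σ₂ < 1 := max_lt h₁.1.1.2 h₂.1.1.2
  have hσs : max σ₁ σ₂ ≤ maxSlope n g m := max_le (le_maxSlope_of_linePoint_mem_cell hg0 h₁)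
    (heq ▸ le_maxSlope_of_linePoint_mem_cell hg0' h₂)
  -- slope `max σ₁ σ₂` is realised on both lines; then `ρ ∈ [0,1)` forces `m = m'`
  have hp := linePoint_mem_cell_of_le hg0 h₁ (le_max_left _ _) hσs hσ1
  have hp' := linePoint_mem_cell_of_le hg0' h₂ (le_max_right _ _) (heq ▸ hσs) hσ1
  obtain rfl : m = m' := (eq_ceil_of_linePoint_mem_cell hp).trans
    (eq_ceil_of_linePoint_mem_cell hp').symm
  have hgg : g = g' :=
    (floorVec_eq_of_mem_cell (fun _ => eq_zero_of_mem_floorVecs hg) hp).symm.trans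
      (floorVec_eq_of_mem_cell (fun _ => eq_zero_of_mem_floorVecs hg') hp')
  rw [hgg]

-- Moving along `(-1, n)` never decreases `kσ + ρ` for `k ≤ n`, so only strict constraints matter.
lemma eventually_mem_cell (hp : p ∈ cell n g) :
    ∀ᶠ σ in 𝓝[<] p.1, (σ, p.2 + n * (p.1 - σ)) ∈ cell n g := by
  obtain ⟨⟨⟨hσ0, hσ1⟩, hρ0, hρ1⟩, hk⟩ := hp
  have hlim : ∀ c : ℝ, Tendsto (fun σ => c * σ + (p.2 + n * (p.1 - σ))) (𝓝 p.1)
      (𝓝 (c * p.1 + p.2)) := fun c =>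
    Continuous.tendsto' (by fun_prop) _ _ (by ring)
  have hopen : ∀ᶠ σ in 𝓝 p.1, 0 < σ ∧ 0 * σ + (p.2 + n * (p.1 - σ)) < 1 ∧
      ∀ k ∈ Iic n, k * σ + (p.2 + n * (p.1 - σ)) < g k + 1 :=
    (eventually_gt_nhds hσ0).and (((hlim 0).eventually_lt_const (by simpa using hρ1)).and
      ((eventually_all_finite (finite_Iic n)).mpr fun k hk' =>
        (hlim k).eventually_lt_const (hk k hk').2))
  filter_upwards [nhdsWithin_le_nhds hopen, self_mem_nhdsWithin] with σ ⟨h0, h1, hup⟩ hlt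
  rw [zero_mul, zero_add] at h1
  have hlt : σ < p.1 := hlt
  refine ⟨⟨⟨h0, hlt.trans hσ1⟩, by positivity, h1⟩, fun k hkn => ⟨?_, hup k hkn⟩⟩
  have hkn' : (k : ℝ) ≤ n := by exact_mod_cast hkn
  nlinarith [(hk k hkn).1]

lemma exists_irrational_mem_cell (hp : p ∈ cell n g) : ∃ q ∈ cell n g, Irrational q.1 := by
  obtain ⟨σ, hσ, hmem⟩ := (eventually_mem_cell hp).exists_irrational
  exact ⟨_, hmem, hσ⟩

lemma mem_cuts_of_mem_cell (hp : p ∈ cell n g) (hpm : nextArg n p = m) : m ∈ cuts n g := by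
  obtain ⟨σ, hx, hσ⟩ := ((eventually_mem_cell hp).and self_mem_nhdsWithin).exists
  refine ⟨⟨_, hx, ?_⟩, p, hp, hpm.ge⟩
  have hσ : σ < p.1 := hσ
  rw [← hpm, nextArg, nextArg]
  linarith

-- Every constraint holds at slope `s`, with equality at `k = n + 1 - s.den` as `s.den * s ∈ ℤ`.
lemma exists_cutPair_maxSlope_eq {s : ℚ} (hs0 : 0 < s) (hs1 : s ≤ 1) (hden : s.den ≤ n + 1) :
    ∃ x ∈ cutPairs n, maxSlope n x.1 x.2 = s := by
  set m : ℤ := ⌈(n + 1) * (s : ℝ)⌉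
  set g : ℕ → ℤ := fun k => if k ≤ n then m - ⌈(n + 1 - k) * (s : ℝ)⌉ else 0
  have hgk : ∀ k ≤ n, m - g k = ⌈(n + 1 - k) * (s : ℝ)⌉ := by intro k hk; simp [g, hk]
  have hg0 : g 0 = 0 := by simp [g, m]
  have hub : ∀ k ≤ n, (n + 1 - k) * (s : ℝ) ≤ m - g k := fun k hk => by
    rw [← Int.cast_sub, hgk k hk]
    exact Int.le_ceil _
  obtain ⟨σ, hσ0, hσs, hσ⟩ := exists_lt_forall_ceil_sub_one_lt (a := s) (by exact_mod_cast hs0)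
    (fun k => n + 1 - k) n
  have hy : linePoint n m σ ∈ cell n g := by
    refine (linePoint_mem_cell_iff hg0).mpr ⟨⟨hσ0, hσs.trans_le (by exact_mod_cast hs1)⟩,
      fun k hk => ⟨?_, ?_⟩⟩
    · rw [← Int.cast_sub, hgk k hk]
      exact hσ k hk
    · exact (mul_le_mul_of_nonneg_left hσs.le (natCast_add_one_sub_pos hk).le).trans (hub k hk)
  have hg : g ∈ floorVecs n :=
    mem_floorVecs_iff.mpr ⟨fun k hk => by simp [g, hk.not_ge], _, hy⟩
  refine ⟨(g, m), ⟨hg, mem_cuts_of_mem_cell hy (nextArg_linePoint m σ)⟩, ?_⟩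
  have hk : n + 1 - s.den ≤ n := by have := s.den_pos; omega
  have hc : ((n : ℚ) + 1 - ((n + 1 - s.den : ℕ) : ℚ)) = s.den := by
    rw [Nat.cast_sub hden]; push_cast; exact sub_sub_cancel _ _
  have hnum : ((m : ℚ) - g (n + 1 - s.den)) = s.num := by
    have hq : ((n : ℝ) + 1 - ((n + 1 - s.den : ℕ) : ℝ)) * s = s.num := by
      have e : (s.den : ℝ) * s = s.num := by exact_mod_cast Rat.den_mul_eq_num s
      rw [Nat.cast_sub hden]; push_cast; rw [sub_sub_cancel, e]
    rw [← Int.cast_sub, hgk _ hk, hq, Int.ceil_intCast]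
  refine le_antisymm ((maxSlope_le hk).trans_eq ?_)
    (by exact_mod_cast le_maxSlope_iff.mpr ⟨by exact_mod_cast hs1, hub⟩)
  rw [hnum, hc, Rat.num_div_den]

lemma image_maxSlope_cutPairs (n : ℕ) :
    (fun x => maxSlope n x.1 x.2) '' cutPairs n = {s : ℚ | 0 < s ∧ s ≤ 1 ∧ s.den ≤ n + 1} := by
  refine Subset.antisymm ?_ fun s ⟨hs0, hs1, hden⟩ => exists_cutPair_maxSlope_eq hs0 hs1 hden
  rintro _ ⟨x, hx, rfl⟩
  exact ⟨maxSlope_pos hx, min_le_left _ _, den_maxSlope_le n _ _⟩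

lemma ncard_cutPairs (n : ℕ) : (cutPairs n).ncard = ∑ q ∈ Finset.Icc 1 (n + 1), q.totient := by
  rw [← (injOn_maxSlope n).ncard_image, image_maxSlope_cutPairs, ncard_setOf_rat_den_le]

lemma floorVecs_zero : floorVecs 0 = {0} := by
  ext g
  refine ⟨fun hg => funext fun k => ?_, ?_⟩
  · rcases k with _ | k
    · exact apply_zero_of_mem_floorVecs hg
    · exact eq_zero_of_mem_floorVecs hg k.succ_pos
  · rintro rfl
    refine ⟨(1 / 2, 0), ⟨⟨by norm_num, by norm_num⟩, le_rfl, one_pos⟩, funext fun k => ?_⟩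
    rcases k with _ | k <;> simp [floorVec]

lemma ncard_floorVecs (n : ℕ) :
    (floorVecs n).ncard = 1 + ∑ q ∈ Finset.Icc 1 n, q.totient * (n + 1 - q) := by
  induction n with
  | zero => simp [floorVecs_zero]
  | succ n ih =>
    have htop : ∑ q ∈ Finset.Icc 1 n, q.totient * (n + 1 - q) =
        ∑ q ∈ Finset.Icc 1 (n + 1), q.totient * (n + 1 - q) := by
      rw [Finset.sum_Icc_succ_top (by omega), Nat.sub_self, mul_zero, add_zero]
    rw [ncard_floorVecs_succ, ih, ncard_cutPairs, htop, add_assoc, ← Finset.sum_add_distrib]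
    congr 1
    refine Finset.sum_congr rfl fun q hq => ?_
    rw [show n + 1 + 1 - q = n + 1 - q + 1 by have := (Finset.mem_Icc.mp hq).2; omega]
    ring

def diffWord (n : ℕ) (g : ℕ → ℤ) : List ℤ := (List.range n).map fun k => g (k + 1) - g k

lemma diffWord_floorVec (n : ℕ) (p : ℝ × ℝ) :
    diffWord n (floorVec n p) = mechPrefix p.1 p.2 n := by
  refine List.map_congr_left fun k hk => ?_
  have hk : k < n := List.mem_range.mp hk
  simp only [floorVec, if_pos (Nat.succ_le_of_lt hk), if_pos hk.le, lowerMech]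
  push_cast
  rfl

lemma injOn_diffWord (n : ℕ) : InjOn (diffWord n) (floorVecs n) := by
  intro g hg g' hg' h
  have hd : ∀ k < n, g (k + 1) - g k = g' (k + 1) - g' k := fun k hk =>
    List.map_inj_left.mp h k (List.mem_range.mpr hk)
  have hle : ∀ k ≤ n, g k = g' k := by
    intro k
    induction k with
    | zero => intro _; rw [apply_zero_of_mem_floorVecs hg, apply_zero_of_mem_floorVecs hg']
    | succ k ih => intro hk; have := hd k hk; have := ih (by omega); omega
  funext k
  by_cases hk : k ≤ n
  · exact hle k hk
  · rw [eq_zero_of_mem_floorVecs hg (not_le.mp hk), eq_zero_of_mem_floorVecs hg' (not_le.mp hk)]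

lemma image_diffWord_floorVecs (n : ℕ) : diffWord n '' floorVecs n = SturmianFactors n := by
  ext u
  constructor
  · rintro ⟨_, ⟨p, hp, rfl⟩, rfl⟩
    obtain ⟨q, hq, hirr⟩ := exists_irrational_mem_cell (mem_cell_floorVec (n := n) hp)
    obtain ⟨⟨⟨hσ0, hσ1⟩, hρ0, hρ1⟩, -⟩ := id hq
    rw [← floorVec_eq_of_mem_cell (g := floorVec n p) (fun _ => floorVec_of_lt) hq,
      diffWord_floorVec]
    exact ⟨q.1, q.2, hirr, hσ0, hσ1, hρ0, hρ1, rfl⟩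
  · rintro ⟨σ, ρ, -, hσ0, hσ1, hρ0, hρ1, rfl⟩
    exact ⟨_, ⟨(σ, ρ), ⟨⟨hσ0, hσ1⟩, hρ0, hρ1⟩, rfl⟩, diffWord_floorVec n (σ, ρ)⟩

end Sturmian

theorem card_sturmian_factors (n : ℕ) :
    Set.ncard (SturmianFactors n) =
      1 + ∑ q ∈ Finset.Icc 1 n, Nat.totient q * (n + 1 - q) := by
  rw [← Sturmian.image_diffWord_floorVecs, (Sturmian.injOn_diffWord n).ncard_image,
    Sturmian.ncard_floorVecs]
end

section
/- For every finite word u and every letter x, the number of distinct palindromic factors of ux is at most one more than the number of distinct palindromic factors of u: P(ux) ≤ P(u) + 1. -/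
/-- The number of distinct palindromic factors of a finite word `u`
(including the empty word). -/
noncomputable def palCount {A : Type*} (u : List A) : ℕ :=
  Set.ncard {p : List A | p.Palindrome ∧ p <:+: u}

/-!
A palindromic factor of `u ++ [x]` that does not occur in `u` must be a suffix of `u ++ [x]`.
Of two distinct palindromic suffixes, the shorter one is a proper suffix, hence (by symmetry)
a proper prefix, of the longer one, so it already occurs in `u`. Thus only the longest
palindromic suffix of `u ++ [x]` can be new.
-/

namespace List

variable {A : Type*}

theorem Palindrome.prefix_of_suffix {p q : List A} (hp : p.Palindrome) (hq : q.Palindrome)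
    (h : p <:+ q) : p <+: q := by
  simpa only [hp.reverse_eq, hq.reverse_eq] using h.reverse

theorem infix_of_prefix_of_suffix_concat {p q u : List A} {x : A} (hpq : p <+: q) (hne : p ≠ q)
    (hq : q <:+ u ++ [x]) : p <:+: u := by
  rcases suffix_concat_iff.1 hq with rfl | ⟨t, rfl, ht⟩
  · exact absurd (prefix_nil.1 hpq) hne
  · rcases prefix_concat_iff.1 hpq with h | h
    · exact absurd h hne
    · exact h.isInfix.trans ht.isInfix

end List

section PalFactors

open List

variable {A : Type*}

def palFactors (u : List A) : Set (List A) :=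
  {p | p.Palindrome ∧ p <:+: u}

theorem palCount_eq_ncard_palFactors (u : List A) : palCount u = (palFactors u).ncard :=
  rfl

theorem palFactors_finite (u : List A) : (palFactors u).Finite :=
  u.sublists.finite_toSet.subset fun _ hp => by simpa using hp.2.sublist

theorem subsingleton_palFactors_concat_sdiff (u : List A) (x : A) :
    (palFactors (u ++ [x]) \ palFactors u).Subsingleton := by
  have suffix_of_new : ∀ p ∈ palFactors (u ++ [x]) \ palFactors u, p <:+ u ++ [x] :=
    fun p ⟨⟨hpal, hp⟩, hnew⟩ => (infix_concat_iff.1 hp).resolve_right fun h => hnew ⟨hpal, h⟩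
  have not_proper_suffix : ∀ p ∈ palFactors (u ++ [x]) \ palFactors u,
      ∀ q ∈ palFactors (u ++ [x]) \ palFactors u, p <:+ q → p = q := by
    intro p hp q hq hpq
    by_contra hne
    exact hp.2 ⟨hp.1.1, infix_of_prefix_of_suffix_concat (hp.1.1.prefix_of_suffix hq.1.1 hpq) hne
      (suffix_of_new q hq)⟩
  intro p hp q hq
  rcases suffix_or_suffix_of_suffix (suffix_of_new p hp) (suffix_of_new q hq) with h | h
  · exact not_proper_suffix p hp q hq h
  · exact (not_proper_suffix q hq p hp h).symm

end PalFactors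

theorem palCount_append_singleton_le {A : Type*} (u : List A) (x : A) :
    palCount (u ++ [x]) ≤ palCount u + 1 := by
  have hnew := subsingleton_palFactors_concat_sdiff u x
  rw [palCount_eq_ncard_palFactors, palCount_eq_ncard_palFactors]
  calc (palFactors (u ++ [x])).ncard
      ≤ (palFactors (u ++ [x]) \ palFactors u).ncard + (palFactors u).ncard :=
        Set.ncard_le_ncard_sdiff_add_ncard _ _ (palFactors_finite u)
    _ ≤ 1 + (palFactors u).ncard := by
        gcongr
        exact (Set.ncard_le_one hnew.finite).2 fun _ ha _ hb => hnew ha hb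
    _ = (palFactors u).ncard + 1 := add_comm _ _
end

section
/- For any exponents k_0, …, k_n with 0 ≤ k_i ≤ d_i for each i, the word s_n^{k_n} s_{n-1}^{k_{n-1}} ⋯ s_0^{k_0} is a prefix of c_{n+1} (and hence of the characteristic word s_d). -/
/-! Writing `c_n` for `s_n s_{n-1}` minus its last two letters, one shows by induction that
`c_n` is also `s_{n-1} s_n` minus its last two letters, and hence that
`c_{n+1} = s_n^{d_n} c_n`. Both `c_n` and `s_n c_n` are prefixes of `s_n s_{n-1} s_n`, so `c_n`
is a prefix of `s_n c_n`, and therefore of `s_n^j c_n` for every `j`. Consequently, if `w` is a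
prefix of `c_n` and `k ≤ d_n`, then `s_n^k w` is a prefix of `s_n^k s_n^{d_n - k} c_n = c_{n+1}`;
iterating this from `w = []` builds `s_n^{k_n} ⋯ s_0^{k_0}` as a prefix of `c_{n+1}`. -/

/-- `wpow u k` is the `k`-fold concatenation of the word `u`. -/
def wpow {A : Type*} (u : List A) (k : ℕ) : List A :=
  (List.replicate k u).flatten

/-- The descending product `s_n^{e_n} s_{n-1}^{e_{n-1}} ⋯ s_0^{e_0}`,
where `S (i+1)` encodes the standard word `s_i`. -/
def descProd {A : Type*} (S : ℕ → List A) (e : ℕ → ℕ) : ℕ → List A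
  | 0 => wpow (S 1) (e 0)
  | n + 1 => wpow (S (n + 2)) (e (n + 1)) ++ descProd S e n

section Words

variable {A : Type*}

theorem wpow_add (u : List A) (m n : ℕ) : wpow u (m + n) = wpow u m ++ wpow u n := by
  simp only [wpow, List.replicate_add, List.flatten_append]

theorem wpow_one (u : List A) : wpow u 1 = u := by
  simp [wpow]

theorem append_wpow_comm (u : List A) (k : ℕ) : u ++ wpow u k = wpow u k ++ u := by
  simpa [wpow_add, wpow_one] using congrArg (wpow u) (Nat.add_comm 1 k)

theorem dropLast_dropLast_append (u : List A) {v w : List A} (hv : v ≠ []) (hw : w ≠ []) :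
    (u ++ (v ++ w)).dropLast.dropLast = u ++ (v ++ w).dropLast.dropLast := by
  simp [hv, hw]

end Words

/-- The central word `c_n`, recalling that `S (n + 1)` encodes `s_n`. -/
def central {A : Type*} (S : ℕ → List A) (n : ℕ) : List A :=
  (S (n + 1) ++ S n).dropLast.dropLast

section StandardWords

variable {A : Type*} {a b : A} {d : ℕ → ℕ} {S : ℕ → List A}
  (hS0 : S 0 = [b]) (hS1 : S 1 = [a])
  (hrec : ∀ n, S (n + 2) = wpow (S (n + 1)) (d n) ++ S n)

include hS0 hS1 hrec

theorem standard_ne_nil : ∀ n, S n ≠ []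
  | 0 => by simp [hS0]
  | 1 => by simp [hS1]
  | n + 2 => by simp [hrec n, standard_ne_nil n]

theorem central_succ_eq_wpow_append_swap (n : ℕ) :
    central S (n + 1) = wpow (S (n + 1)) (d n) ++ (S n ++ S (n + 1)).dropLast.dropLast := by
  rw [central, hrec, List.append_assoc,
    dropLast_dropLast_append _ (standard_ne_nil hS0 hS1 hrec _) (standard_ne_nil hS0 hS1 hrec _)]

theorem central_eq_swap : ∀ n, central S n = (S n ++ S (n + 1)).dropLast.dropLast
  | 0 => by simp [central, hS0, hS1]
  | n + 1 => by
    rw [central_succ_eq_wpow_append_swap hS0 hS1 hrec, ← central_eq_swap n, central, hrec,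
      ← List.append_assoc, append_wpow_comm, List.append_assoc,
      dropLast_dropLast_append _ (standard_ne_nil hS0 hS1 hrec _) (standard_ne_nil hS0 hS1 hrec _)]

theorem central_succ (n : ℕ) : central S (n + 1) = wpow (S (n + 1)) (d n) ++ central S n := by
  rw [central_succ_eq_wpow_append_swap hS0 hS1 hrec, central_eq_swap hS0 hS1 hrec]

theorem central_prefix_append (n : ℕ) : central S n <+: S (n + 1) ++ central S n := by
  have h₁ : central S n <+: S (n + 1) ++ S n ++ S (n + 1) :=
    ((List.dropLast_prefix _).trans (List.dropLast_prefix _)).trans (List.prefix_append _ _)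
  have h₂ : S (n + 1) ++ central S n <+: S (n + 1) ++ S n ++ S (n + 1) := by
    rw [central_eq_swap hS0 hS1 hrec, List.append_assoc, List.prefix_append_right_inj]
    exact (List.dropLast_prefix _).trans (List.dropLast_prefix _)
  exact List.prefix_of_prefix_length_le h₁ h₂ (by simp)

theorem central_prefix_wpow_append (n : ℕ) :
    ∀ j, central S n <+: wpow (S (n + 1)) j ++ central S n
  | 0 => by simp [wpow]
  | j + 1 => by
    rw [wpow_add, wpow_one, List.append_assoc]
    exact (central_prefix_wpow_append n j).trans
      ((List.prefix_append_right_inj _).mpr (central_prefix_append hS0 hS1 hrec n))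

theorem wpow_append_prefix_central_succ {n k : ℕ} (hk : k ≤ d n) {w : List A}
    (hw : w <+: central S n) : wpow (S (n + 1)) k ++ w <+: central S (n + 1) := by
  obtain ⟨j, hj⟩ := Nat.exists_eq_add_of_le hk
  rw [central_succ hS0 hS1 hrec, hj, wpow_add, List.append_assoc, List.prefix_append_right_inj]
  exact hw.trans (central_prefix_wpow_append hS0 hS1 hrec n j)

end StandardWords

theorem descProd_prefix_central_general (d : ℕ → ℕ)
    (S : ℕ → List (Fin 2))
    (hS0 : S 0 = [1]) (hS1 : S 1 = [0])
    (hrec : ∀ n, S (n + 2) = wpow (S (n + 1)) (d n) ++ S n)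
    (n : ℕ) (k : ℕ → ℕ) (hk : ∀ i, i ≤ n → k i ≤ d i) :
    descProd S k n <+: (S (n + 2) ++ S (n + 1)).dropLast.dropLast := by
  induction n with
  | zero =>
    have h := wpow_append_prefix_central_succ hS0 hS1 hrec (hk 0 le_rfl)
      (List.nil_prefix (l := central S 0))
    rwa [List.append_nil] at h
  | succ n ih =>
    exact wpow_append_prefix_central_succ hS0 hS1 hrec (hk (n + 1) le_rfl)
      (ih fun i hi => hk i (by omega))

/-- For any exponents `k_i ≤ d_i`, the word `s_n^{k_n} ⋯ s_0^{k_0}` is a prefix of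
the central word `c_{n+1}` (the word `s_{n+1} s_n` with its last two letters removed). -/
theorem descProd_prefix_central (d : ℕ → ℕ)
    (hd0 : 1 ≤ d 0) (hd : ∀ n, 1 ≤ n → 1 ≤ d n)
    (S : ℕ → List (Fin 2))
    (hS0 : S 0 = [1]) (hS1 : S 1 = [0])
    (hrec : ∀ n, S (n + 2) = wpow (S (n + 1)) (d n) ++ S n)
    (n : ℕ) (k : ℕ → ℕ) (hk : ∀ i, i ≤ n → k i ≤ d i) :
    descProd S k n <+: (S (n + 2) ++ S (n + 1)).dropLast.dropLast :=
  descProd_prefix_central_general d S hS0 hS1 hrec n k hk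
end

section
/- Let u be a palindrome and v a palindromic proper prefix of u with 0 < |v| < |u|. Then u is (|u| − |v|)-periodic, i.e., u[i] = u[i + |u| − |v|] for all valid indices i. -/
theorem palindrome_prefix_periodic {A : Type*} (u v : List A)
    (hu : u.Palindrome) (hv : v.Palindrome) (hpre : v <+: u)
    (h0 : 0 < v.length) (h1 : v.length < u.length) :
    ∀ i : ℕ, ∀ h : i + (u.length - v.length) < u.length,
      u[i]'(by omega) = u[i + (u.length - v.length)]'h := by
  intro i h
  set n := u.length with hn
  set m := v.length with hm
  have him : i < m := by omega
  have hur : u.reverse = u := hu.reverse_eq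
  have hvr : v.reverse = v := hv.reverse_eq
  -- u[i+n-m] = u[m-1-i]
  have e1 : u[i + (n - m)]'h = u[m - 1 - i]'(by omega) := by
    rw [List.getElem_of_eq hur.symm, List.getElem_reverse]
    congr 1
    simp only [List.length_reverse, ← hn]
    omega
  -- u[m-1-i] = v[m-1-i]
  have e2 : u[m - 1 - i]'(by omega) = v[m - 1 - i]'(by omega) :=
    (List.IsPrefix.getElem hpre _).symm
  -- v[m-1-i] = v[i]
  have e3 : v[m - 1 - i]'(by omega) = v[i]'him := by
    rw [List.getElem_of_eq hvr.symm, List.getElem_reverse]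
    congr 1
    simp only [List.length_reverse, ← hm]
    omega
  -- u[i] = v[i]
  have e4 : u[i]'(by omega) = v[i]'him := (List.IsPrefix.getElem hpre _).symm
  rw [e1, e2, e3, e4]
end

section
/- Let w be an infinite word avoiding k-th powers (k ≥ 2), and suppose w[i₁..i₂] and w[i₁..i₃] are both palindromes with i₂ < i₃. Then |w[i₁..i₃]| / |w[i₁..i₂]| > 1 + 1/(k−1), i.e., (k−1)·(i₃ − i₁ + 1) > k·(i₂ − i₁ + 1). -/
/-- The factor `w[i..j]` (inclusive) of the infinite word `w`. -/
def wseg {A : Type*} (w : ℕ → A) (i j : ℕ) : List A :=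
  (List.range (j + 1 - i)).map (fun t => w (i + t))

/-- `w` avoids `k`-th powers: no factor of `w` is of the form `u^k` with `u` nonempty. -/
def AvoidsPower {A : Type*} (w : ℕ → A) (k : ℕ) : Prop :=
  ∀ u : List A, u ≠ [] → ∀ i : ℕ, wpow u k ≠ wseg w i (i + (wpow u k).length - 1)

/-- Unlike `wseg`, indexed by length, so that the empty factor has no truncated-subtraction
corner case. -/
def factor {A : Type*} (w : ℕ → A) (i n : ℕ) : List A :=
  (List.range n).map (fun t => w (i + t))

section Factor

variable {A : Type*} (w : ℕ → A)

theorem wseg_eq_factor (i j : ℕ) : wseg w i j = factor w i (j + 1 - i) := rfl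

@[simp]
theorem length_factor (i n : ℕ) : (factor w i n).length = n := by
  simp [factor]

@[simp]
theorem getElem_factor (i n t : ℕ) (ht : t < (factor w i n).length) :
    (factor w i n)[t] = w (i + t) := by
  simp [factor]

theorem factor_add (i m n : ℕ) : factor w i (m + n) = factor w i m ++ factor w (i + m) n := by
  simp [factor, List.range_add, Nat.add_assoc]

theorem wpow_succ (u : List A) (k : ℕ) : wpow u (k + 1) = u ++ wpow u k := by
  simp [wpow, List.replicate_succ]

theorem factor_mul_eq_wpow {i p : ℕ} (m : ℕ)
    (hper : ∀ t, t + p < m * p → w (i + (t + p)) = w (i + t)) :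
    factor w i (m * p) = wpow (factor w i p) m := by
  induction m with
  | zero => simp [factor, wpow]
  | succ m ih =>
    have hshift : factor w (i + p) (m * p) = factor w i (m * p) := by
      refine List.ext_getElem (by simp) fun t ht _ => ?_
      simp only [getElem_factor, Nat.add_assoc, Nat.add_comm p t]
      simp only [length_factor] at ht
      exact hper t (by rw [Nat.succ_mul]; omega)
    rw [Nat.succ_mul, Nat.add_comm, factor_add, hshift, wpow_succ,
      ih fun t ht => hper t (by rw [Nat.succ_mul]; omega)]

theorem AvoidsPower.length_lt_of_period {k : ℕ} (hw : AvoidsPower w k) (hk : 0 < k)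
    {i p n : ℕ} (hp : 0 < p) (hper : ∀ t, t + p < n → w (i + (t + p)) = w (i + t)) :
    n < k * p := by
  by_contra! hn
  have hpow := factor_mul_eq_wpow w k fun t ht => hper t (by omega)
  have hkp : 0 < k * p := Nat.mul_pos hk hp
  refine hw (factor w i p) (by simp [← List.length_pos_iff, hp]) i ?_
  rw [← hpow, wseg_eq_factor, length_factor]
  congr 1
  omega

end Factor

theorem mul_lt_pred_mul_add_of_add_lt_mul {a b k : ℕ} (h : a + b < k * b) :
    k * a < (k - 1) * (a + b) := by
  obtain _ | j := k
  · simp at h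
  · simp only [Nat.add_sub_cancel]
    nlinarith

namespace List

variable {α : Type*}

theorem Palindrome.getElem_eq_getElem_length_sub {l : List α} (hl : l.Palindrome) {t : ℕ}
    (ht : t < l.length) : l[t] = l[l.length - 1 - t] := by
  rw [← List.getElem_reverse (by simpa using ht)]
  exact List.getElem_of_eq hl.reverse_eq.symm ht

theorem Palindrome.getElem_add_of_isPrefix {u v : List α} (hu : u.Palindrome) (hv : v.Palindrome)
    (hvu : v <+: u) {t : ℕ} (ht : t + (u.length - v.length) < u.length) :
    u[t + (u.length - v.length)] = u[t] := by
  have hlen := hvu.length_le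
  have htv : t < v.length := by omega
  calc u[t + (u.length - v.length)]
      = u[u.length - 1 - (t + (u.length - v.length))] := hu.getElem_eq_getElem_length_sub ht
    _ = v[v.length - 1 - t] := by
        rw [hvu.getElem (by omega)]
        congr 1
        omega
    _ = v[t] := (hv.getElem_eq_getElem_length_sub htv).symm
    _ = u[t] := hvu.getElem htv

end List

theorem palindromes_same_start_ratio {A : Type*} (w : ℕ → A) (k : ℕ)
    (hk : 2 ≤ k) (hw : AvoidsPower w k) (i₁ i₂ i₃ : ℕ)
    (h12 : i₁ ≤ i₂) (h23 : i₂ < i₃)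
    (hp2 : (wseg w i₁ i₂).Palindrome) (hp3 : (wseg w i₁ i₃).Palindrome) :
    k * (i₂ - i₁ + 1) < (k - 1) * (i₃ - i₁ + 1) := by
  have hsplit : i₃ + 1 - i₁ = (i₂ + 1 - i₁) + (i₃ - i₂) := by omega
  have hprefix : wseg w i₁ i₂ <+: wseg w i₁ i₃ := by
    rw [wseg_eq_factor, wseg_eq_factor, hsplit, factor_add]
    exact List.prefix_append _ _
  have hper : ∀ t, t + (i₃ - i₂) < i₃ + 1 - i₁ → w (i₁ + (t + (i₃ - i₂))) = w (i₁ + t) := by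
    intro t ht
    simpa [wseg_eq_factor, hsplit] using
      hp3.getElem_add_of_isPrefix hp2 hprefix (t := t) (by simpa [wseg_eq_factor, hsplit] using ht)
  have hbound := hw.length_lt_of_period w (by omega) (by omega) hper
  rw [hsplit, show i₂ + 1 - i₁ = i₂ - i₁ + 1 by omega] at hbound
  rw [show i₃ - i₁ + 1 = (i₂ - i₁ + 1) + (i₃ - i₂) by omega]
  exact mul_lt_pred_mul_add_of_add_lt_mul hbound
end
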